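/- arXiv:1707.01316 — 4 statements merged into one kernel-verified Lean document; each statement's English description precedes it below -/
import Mathlib

section
/- For a reactive collision, the kinetic energy of relative motion satisfies (1/2)μ₁₂‖v₁ − v₂‖² = (1/2)μ₃₄‖v₃° − v₄°‖² + Q_R. -/
open scoped RealInnerProductSpace

noncomputable section

abbrev E3 := EuclideanSpace ℝ (Fin 3)

/-- For a reactive collision, the kinetic energy of relative motion satisfies
`(1/2)μ₁₂‖v₁ − v₂‖² = (1/2)μ₃₄‖v₃° − v₄°‖² + Q_R`. -/
theorem reactive_collision_relative_kinetic_energy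
    (m1 m2 m3 m4 M : ℝ) (hm1 : 0 < m1) (hm2 : 0 < m2) (hm3 : 0 < m3) (hm4 : 0 < m4)
    (hM12 : m1 + m2 = M) (hM34 : m3 + m4 = M)
    (μ12 μ34 : ℝ) (hμ12 : μ12 = m1 * m2 / M) (hμ34 : μ34 = m3 * m4 / M)
    (QR : ℝ) (v1 v2 ε : E3) (hε : ‖ε‖ = 1)
    (hthr : μ12 * ⟪ε, v1 - v2⟫ ^ 2 ≥ 2 * QR)
    (ωm : ℝ) (hω : ωm = Real.sqrt (⟪ε, v1 - v2⟫ ^ 2 - 2 * QR / μ12))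
    (v3o v4o : E3)
    (hv3 : v3o = (1 / M) •
      (m1 • v1 + m2 • v2 + (m4 * Real.sqrt (μ12 / μ34)) •
        ((v1 - v2) - ⟪ε, v1 - v2⟫ • ε + ωm • ε)))
    (hv4 : v4o = (1 / M) •
      (m1 • v1 + m2 • v2 - (m3 * Real.sqrt (μ12 / μ34)) •
        ((v1 - v2) - ⟪ε, v1 - v2⟫ • ε + ωm • ε))) :
    (1 / 2) * μ12 * ‖v1 - v2‖ ^ 2 = (1 / 2) * μ34 * ‖v3o - v4o‖ ^ 2 + QR := by
  have hMpos : 0 < M := by linarith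
  have hμ12pos : 0 < μ12 := by rw [hμ12]; positivity
  have hμ34pos : 0 < μ34 := by rw [hμ34]; positivity
  set u := v1 - v2 with hu
  set t : ℝ := ⟪ε, u⟫ with ht
  set s : ℝ := Real.sqrt (μ12 / μ34) with hs
  set w : E3 := u - t • ε + ωm • ε with hw
  have hdiff : v3o - v4o = s • w := by
    rw [hv3, hv4]
    have hMne : M ≠ 0 := ne_of_gt hMpos
    match_scalars
    · field_simp
      linear_combination s * hM34
    · field_simp
      linear_combination (-s) * hM34
    · field_simp
      linear_combination (s * ωm - s * t) * hM34
  have hnw : ‖w‖ ^ 2 = ‖u‖ ^ 2 - t ^ 2 + ωm ^ 2 := by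
    have horth : ⟪u - t • ε, ωm • ε⟫ = 0 := by
      rw [inner_sub_left, inner_smul_right, inner_smul_right, inner_smul_left,
        real_inner_self_eq_norm_sq, hε, real_inner_comm]
      simp [ht]
    have h1 : ‖w‖ ^ 2 = ‖u - t • ε‖ ^ 2 + ‖ωm • ε‖ ^ 2 := by
      rw [hw, norm_add_sq_real, horth]; ring
    have h2 : ‖u - t • ε‖ ^ 2 = ‖u‖ ^ 2 - t ^ 2 := by
      rw [norm_sub_sq_real, inner_smul_right, norm_smul, real_inner_comm, ← ht, hε]
      simp [abs_mul_abs_self]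
      ring
    have h3 : ‖ωm • ε‖ ^ 2 = ωm ^ 2 := by
      rw [norm_smul, hε]; simp [sq_abs]
    rw [h1, h2, h3]
  have hω2 : ωm ^ 2 = t ^ 2 - 2 * QR / μ12 := by
    rw [hω, Real.sq_sqrt]
    have : 2 * QR / μ12 ≤ t ^ 2 := by
      rw [div_le_iff₀ hμ12pos]; nlinarith
    linarith
  have hs2 : s ^ 2 = μ12 / μ34 := Real.sq_sqrt (by positivity)
  have hns : ‖v3o - v4o‖ ^ 2 = (μ12 / μ34) * ‖w‖ ^ 2 := by
    rw [hdiff, norm_smul, mul_pow, Real.norm_eq_abs, sq_abs, hs2]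
  rw [hns, hnw, hω2]
  field_simp
  ring
end
end

section
/- Maxwellian distributions satisfying the mass action law are equilibria of the SRS model: assume β_ij = β_ji and β₁₂σ₁₂² = β₃₄σ₃₄², and let f_i(v) = n_i (m_i/(2π k_B T))^{3/2} exp(−m_i‖v − u‖²/(2 k_B T)) for i = 1,...,4, where n_i ≥ 0, u ∈ ℝ³, T > 0, k_B > 0, and the number densities satisfy n₁ n₂ = (μ₁₂/μ₃₄)^{1/2} n₃ n₄ exp(Q_R/(k_B T)). Then J_i^E(v) = 0 and J_i^R(v) = 0 for every v ∈ ℝ³ and every i = 1,...,4. -/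
open MeasureTheory
open scoped RealInnerProductSpace

noncomputable section

/-- The surface measure of the unit sphere of `ℝ³`, viewed as a measure on `ℝ³`
(the pushforward along the inclusion of the sphere). -/
def sphMeasure : Measure E3 :=
  Measure.map Subtype.val (volume : Measure E3).toSphere

/-- The Heaviside step function: `1` on `[0, ∞)`, `0` on `(−∞, 0)`. -/
def heav (x : ℝ) : ℝ := if 0 ≤ x then 1 else 0

/-- Product measure `dv ⊗ dw ⊗ dε` on `ℝ³ × ℝ³ × 𝕊²`. -/
def μ3 : Measure (E3 × E3 × E3) := (volume : Measure E3).prod ((volume : Measure E3).prod sphMeasure)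

/-- Product measure `dw ⊗ dε` on `ℝ³ × 𝕊²`. -/
def μ2 : Measure (E3 × E3) := (volume : Measure E3).prod sphMeasure

/-- Reduced mass. -/
def rmass (a b : ℝ) : ℝ := a * b / (a + b)

/-- Elastic post-collisional velocity of the first particle. -/
def vpost (mi ms : ℝ) (vi vs ε : E3) : E3 :=
  vi - (2 * (rmass mi ms / mi) * ⟪ε, vi - vs⟫) • ε

/-- Elastic post-collisional velocity of the second particle. -/
def vpost' (mi ms : ℝ) (vi vs ε : E3) : E3 :=
  vs + (2 * (rmass mi ms / ms) * ⟪ε, vi - vs⟫) • ε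

/-- Reactive post-collisional velocity `v_k°`. -/
def vko (mi mj mk ml Q : ℝ) (vi vj ε : E3) : E3 :=
  (1 / (mi + mj)) • (mi • vi + mj • vj +
    (ml * Real.sqrt (rmass mi mj / rmass mk ml)) •
      ((vi - vj) - ⟪ε, vi - vj⟫ • ε +
        Real.sqrt (⟪ε, vi - vj⟫ ^ 2 - 2 * Q / rmass mi mj) • ε))

/-- Reactive post-collisional velocity `v_l°`. -/
def vlo (mi mj mk ml Q : ℝ) (vi vj ε : E3) : E3 :=
  (1 / (mi + mj)) • (mi • vi + mj • vj -
    (mk * Real.sqrt (rmass mi mj / rmass mk ml)) •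
      ((vi - vj) - ⟪ε, vi - vj⟫ • ε +
        Real.sqrt (⟪ε, vi - vj⟫ ^ 2 - 2 * Q / rmass mi mj) • ε))

/-- Integrand of a (bi- or mono-species) elastic collision operator; it is set to `0` off
the collision hemisphere `⟨ε, v_i − v_s⟩ > 0`, so that integration of this kernel over the
whole sphere coincides with integration over the hemisphere `𝕊²₊(v_i − v_s)`. -/
def elK (σ mi ms : ℝ) (fi fs : E3 → ℝ) (vi vs ε : E3) : ℝ :=
  if 0 < ⟪ε, vi - vs⟫ then
    σ ^ 2 * (fi (vpost mi ms vi vs ε) * fs (vpost' mi ms vi vs ε) - fi vi * fs vs) *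
      ⟪ε, vi - vs⟫
  else 0

/-- Integrand of the correction operator `J_ij^{b*E}` (`0` off the collision hemisphere). -/
def corrK (σ β Ξ mi mj : ℝ) (fi fj : E3 → ℝ) (vi vj ε : E3) : ℝ :=
  if 0 < ⟪ε, vi - vj⟫ then
    β * σ ^ 2 * (fi (vpost mi mj vi vj ε) * fj (vpost' mi mj vi vj ε) - fi vi * fj vj) *
      heav (⟪ε, vi - vj⟫ - Ξ) * ⟪ε, vi - vj⟫
  else 0

/-- Integrand of the reactive operator `J_i^R` (`0` off the collision hemisphere). -/
def reK (σ β Ξ mi mj mk ml Q : ℝ) (fi fj fk fl : E3 → ℝ) (vi vj ε : E3) : ℝ :=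
  if 0 < ⟪ε, vi - vj⟫ then
    β * σ ^ 2 *
      ((rmass mi mj / rmass mk ml) ^ 2 * fk (vko mi mj mk ml Q vi vj ε) *
          fl (vlo mi mj mk ml Q vi vj ε) - fi vi * fj vj) *
      heav (⟪ε, vi - vj⟫ - Ξ) * ⟪ε, vi - vj⟫
  else 0

/-- The collision operator associated with a kernel: integrate over the partner velocity and
over the sphere. -/
def colOp (K : E3 → E3 → E3 → ℝ) (vi : E3) : ℝ :=
  ∫ vs, ∫ ε, K vi vs ε ∂sphMeasure ∂volume

/-- The reactive partner of each species (`A₁↔A₂`, `A₃↔A₄`). -/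
def partner : Fin 4 → Fin 4 := ![1, 0, 3, 2]

/-- The first product species of the reaction involving species `i`. -/
def pk : Fin 4 → Fin 4 := ![2, 3, 0, 1]

/-- The second product species of the reaction involving species `i`. -/
def pl : Fin 4 → Fin 4 := ![3, 2, 1, 0]

/-- Sign of the reaction heat for the pair of species `(i, partner i)`. -/
def qsgn : Fin 4 → ℝ := ![1, 1, -1, -1]

/-- The reactive collision kernel of species `i` of the SRS model, given the masses `m`,
pair cross sections `σp` (`σp i = σ_{i, partner i}`), steric factors `βp`, activation
energies `ζp`, reaction heat `QR`, and distribution functions `f`. -/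
def reKi (m σp βp ζp : Fin 4 → ℝ) (QR : ℝ) (f : Fin 4 → E3 → ℝ) (i : Fin 4) :
    E3 → E3 → E3 → ℝ :=
  reK (σp i) (βp i) (Real.sqrt (2 * ζp i / rmass (m i) (m (partner i))))
    (m i) (m (partner i)) (m (pk i)) (m (pl i)) (qsgn i * QR)
    (f i) (f (partner i)) (f (pk i)) (f (pl i))

/-- The elastic operator `J_i^E = J_i^{mE} + Σ_{s≠i} Q_is − J_ij^{b*E}` of species `i`. -/
def JiE (m : Fin 4 → ℝ) (σmat : Fin 4 → Fin 4 → ℝ) (βp ζp : Fin 4 → ℝ)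
    (f : Fin 4 → E3 → ℝ) (i : Fin 4) (v : E3) : ℝ :=
  colOp (elK (σmat i i) (m i) (m i) (f i) (f i)) v
    + (∑ s ∈ Finset.univ.erase i, colOp (elK (σmat i s) (m i) (m s) (f i) (f s)) v)
    - colOp (corrK (σmat i (partner i)) (βp i)
        (Real.sqrt (2 * ζp i / rmass (m i) (m (partner i))))
        (m i) (m (partner i)) (f i) (f (partner i))) v

lemma sph_ae_norm : ∀ᵐ ε ∂sphMeasure, ‖ε‖ = 1 := by
  rw [sphMeasure, MeasureTheory.ae_map_iff measurable_subtype_coe.aemeasurable]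
  · filter_upwards with x
    exact norm_eq_of_mem_sphere x
  · exact (isClosed_eq continuous_norm continuous_const).measurableSet

lemma colOp_zero (K : E3 → E3 → E3 → ℝ) (v : E3)
    (h : ∀ vs ε, ‖ε‖ = 1 → K v vs ε = 0) : colOp K v = 0 := by
  have h2 : ∀ vs, ∫ ε, K v vs ε ∂sphMeasure = 0 := fun vs => by
    apply MeasureTheory.integral_eq_zero_of_ae
    filter_upwards [sph_ae_norm] with ε hε using h vs ε hε
  simp only [colOp, h2, MeasureTheory.integral_zero]
lemma el_energy (mi ms : ℝ) (hmi : 0 < mi) (hms : 0 < ms) (u vi vs ε : E3) (hε : ‖ε‖ = 1) :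
    mi * ‖vpost mi ms vi vs ε - u‖ ^ 2 + ms * ‖vpost' mi ms vi vs ε - u‖ ^ 2 =
    mi * ‖vi - u‖ ^ 2 + ms * ‖vs - u‖ ^ 2 := by
  have h1 : vpost mi ms vi vs ε - u
      = (vi - u) - (2 * (rmass mi ms / mi) * ⟪ε, vi - vs⟫) • ε := by
    rw [vpost]; abel
  have h2 : vpost' mi ms vi vs ε - u
      = (vs - u) + (2 * (rmass mi ms / ms) * ⟪ε, vi - vs⟫) • ε := by
    rw [vpost']; abel
  have hsm : ∀ (c : ℝ), ‖c • ε‖ ^ 2 = c ^ 2 := fun c => by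
    rw [norm_smul, hε, mul_one, Real.norm_eq_abs, sq_abs]
  have hs : ⟪ε, vi - vs⟫ = ⟪vi - u, ε⟫ - ⟪vs - u, ε⟫ := by
    rw [real_inner_comm, ← inner_sub_left]; congr 1; abel
  rw [h1, h2, norm_sub_sq_real, norm_add_sq_real, hsm, hsm,
    real_inner_smul_right, real_inner_smul_right, hs]
  have hM : mi + ms ≠ 0 := by positivity
  rw [rmass]
  field_simp
  ring
/-- Maxwellian distribution. -/
def Mx (nd mv kB T : ℝ) (u : E3) : E3 → ℝ := fun x =>
  nd * (mv / (2 * Real.pi * kB * T)) ^ ((3 : ℝ) / 2) *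
    Real.exp (-(mv * ‖x - u‖ ^ 2) / (2 * kB * T))

lemma mx_mul (na ma nb mb kB T : ℝ) (u x y : E3) :
    Mx na ma kB T u x * Mx nb mb kB T u y =
    (na * (ma / (2 * Real.pi * kB * T)) ^ ((3 : ℝ) / 2)) *
    (nb * (mb / (2 * Real.pi * kB * T)) ^ ((3 : ℝ) / 2)) *
    Real.exp (-(ma * ‖x - u‖ ^ 2 + mb * ‖y - u‖ ^ 2) / (2 * kB * T)) := by
  rw [Mx, Mx]
  rw [show (-(ma * ‖x - u‖ ^ 2 + mb * ‖y - u‖ ^ 2) / (2 * kB * T))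
      = (-(ma * ‖x - u‖ ^ 2) / (2 * kB * T)) + (-(mb * ‖y - u‖ ^ 2) / (2 * kB * T)) by ring,
    Real.exp_add]
  ring

lemma elK_zero (σ mi ms ni ns kB T : ℝ) (hmi : 0 < mi) (hms : 0 < ms) (u vi vs ε : E3)
    (hε : ‖ε‖ = 1) :
    elK σ mi ms (Mx ni mi kB T u) (Mx ns ms kB T u) vi vs ε = 0 := by
  rw [elK]
  split
  · rw [mx_mul, mx_mul, el_energy mi ms hmi hms u vi vs ε hε]
    ring
  · rfl

lemma corrK_zero (σ β Ξ mi mj ni nj kB T : ℝ) (hmi : 0 < mi) (hmj : 0 < mj) (u vi vj ε : E3)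
    (hε : ‖ε‖ = 1) :
    corrK σ β Ξ mi mj (Mx ni mi kB T u) (Mx nj mj kB T u) vi vj ε = 0 := by
  rw [corrK]
  split
  · rw [mx_mul, mx_mul, el_energy mi mj hmi hmj u vi vj ε hε]
    ring
  · rfl
lemma smul_norm_sq (c : ℝ) (x : E3) : ‖c • x‖ ^ 2 = c ^ 2 * ‖x‖ ^ 2 := by
  rw [norm_smul, mul_pow, Real.norm_eq_abs, sq_abs]

lemma nsq_add (A W : E3) (c : ℝ) :
    ‖A + c • W‖ ^ 2 = ‖A‖ ^ 2 + 2 * c * ⟪A, W⟫ + c ^ 2 * ‖W‖ ^ 2 := by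
  rw [norm_add_sq_real, real_inner_smul_right, smul_norm_sq]; ring

lemma nsq_sub (A W : E3) (c : ℝ) :
    ‖A - c • W‖ ^ 2 = ‖A‖ ^ 2 - 2 * c * ⟪A, W⟫ + c ^ 2 * ‖W‖ ^ 2 := by
  rw [norm_sub_sq_real, real_inner_smul_right, smul_norm_sq]; ring

lemma vdecomp_add (mi mj c : ℝ) (h : mi + mj ≠ 0) (u vi vj W : E3) :
    (1 / (mi + mj)) • (mi • vi + mj • vj + c • W) - u
      = (1 / (mi + mj)) • (mi • (vi - u) + mj • (vj - u)) + (c / (mi + mj)) • W := by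
  match_scalars <;> (field_simp; try ring)

lemma vdecomp_sub (mi mj c : ℝ) (h : mi + mj ≠ 0) (u vi vj W : E3) :
    (1 / (mi + mj)) • (mi • vi + mj • vj - c • W) - u
      = (1 / (mi + mj)) • (mi • (vi - u) + mj • (vj - u)) - (c / (mi + mj)) • W := by
  match_scalars <;> (field_simp; try ring)

lemma re_core (mi mj mk ml Q ρ ω s : ℝ) (hmi : 0 < mi) (hmj : 0 < mj) (hmk : 0 < mk)
    (hml : 0 < ml) (hM : mi + mj = mk + ml) (u vi vj ε : E3) (hε : ‖ε‖ = 1)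
    (hs : s = ⟪ε, vi - vj⟫)
    (hρ2 : ρ ^ 2 = rmass mi mj / rmass mk ml)
    (hω2 : ω ^ 2 = s ^ 2 - 2 * Q / rmass mi mj) :
    mk * ‖(1 / (mi + mj)) • (mi • vi + mj • vj + (ml * ρ) • ((vi - vj) - s • ε + ω • ε)) - u‖ ^ 2
      + ml * ‖(1 / (mi + mj)) • (mi • vi + mj • vj - (mk * ρ) • ((vi - vj) - s • ε + ω • ε)) - u‖ ^ 2
      = mi * ‖vi - u‖ ^ 2 + mj * ‖vj - u‖ ^ 2 - 2 * Q := by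
  have hMne : mi + mj ≠ 0 := by positivity
  set W : E3 := (vi - vj) - s • ε + ω • ε with hWdef
  rw [vdecomp_add mi mj (ml * ρ) hMne u vi vj W, vdecomp_sub mi mj (mk * ρ) hMne u vi vj W,
    nsq_add, nsq_sub]
  have hc1 : (ml * ρ / (mi + mj)) ^ 2 * ‖W‖ ^ 2
      = (ml / (mi + mj)) ^ 2 * (rmass mi mj / rmass mk ml) * ‖W‖ ^ 2 := by
    rw [← hρ2]; ring
  have hc2 : (mk * ρ / (mi + mj)) ^ 2 * ‖W‖ ^ 2
      = (mk / (mi + mj)) ^ 2 * (rmass mi mj / rmass mk ml) * ‖W‖ ^ 2 := by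
    rw [← hρ2]; ring
  rw [hc1, hc2]
  have hW : ‖W‖ ^ 2 = ‖vi - vj‖ ^ 2 - 2 * Q / rmass mi mj := by
    have hW' : W = (vi - vj) + (ω - s) • ε := by rw [hWdef]; module
    have hsε : ⟪vi - vj, ε⟫ = s := by rw [hs, real_inner_comm]
    rw [hW', norm_add_sq_real, smul_norm_sq, real_inner_smul_right, hsε, hε]
    linear_combination hω2
  have hg : ‖vi - vj‖ ^ 2 = ‖vi - u‖ ^ 2 - 2 * ⟪vi - u, vj - u⟫ + ‖vj - u‖ ^ 2 := by
    have h : vi - vj = (vi - u) - (vj - u) := by abel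
    rw [h, norm_sub_sq_real]
  have hA : ‖(1 / (mi + mj)) • (mi • (vi - u) + mj • (vj - u))‖ ^ 2
      = (1 / (mi + mj)) ^ 2 * (mi ^ 2 * ‖vi - u‖ ^ 2 + 2 * (mi * mj) * ⟪vi - u, vj - u⟫
          + mj ^ 2 * ‖vj - u‖ ^ 2) := by
    rw [smul_norm_sq, norm_add_sq_real, smul_norm_sq, smul_norm_sq,
      real_inner_smul_left, real_inner_smul_right]
    ring
  rw [hW, hg, hA, rmass, rmass, ← hM]
  generalize (⟪(1 / (mi + mj)) • (mi • (vi - u) + mj • (vj - u)), W⟫ : ℝ) = X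
  generalize (⟪vi - u, vj - u⟫ : ℝ) = β
  generalize ‖vi - u‖ ^ 2 = α
  generalize ‖vj - u‖ ^ 2 = γ
  have hmlne : mi + mj - mk ≠ 0 := by linarith
  rw [show ml = mi + mj - mk by linarith]
  field_simp
  ring

lemma re_energy (mi mj mk ml Q : ℝ) (hmi : 0 < mi) (hmj : 0 < mj) (hmk : 0 < mk)
    (hml : 0 < ml) (hM : mi + mj = mk + ml) (u vi vj ε : E3) (hε : ‖ε‖ = 1)
    (hω : 0 ≤ ⟪ε, vi - vj⟫ ^ 2 - 2 * Q / rmass mi mj) :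
    mk * ‖vko mi mj mk ml Q vi vj ε - u‖ ^ 2 + ml * ‖vlo mi mj mk ml Q vi vj ε - u‖ ^ 2 =
    mi * ‖vi - u‖ ^ 2 + mj * ‖vj - u‖ ^ 2 - 2 * Q := by
  have h1 : 0 < rmass mi mj := by rw [rmass]; positivity
  have h2 : 0 < rmass mk ml := by rw [rmass]; positivity
  rw [vko, vlo]
  exact re_core mi mj mk ml Q _ _ _ hmi hmj hmk hml hM u vi vj ε hε rfl
    (Real.sq_sqrt (by positivity)) (Real.sq_sqrt hω)
lemma rmass_div (mi mj mk ml : ℝ) (hmi : 0 < mi) (hmj : 0 < mj) (hmk : 0 < mk)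
    (hml : 0 < ml) (hM : mi + mj = mk + ml) :
    rmass mi mj / rmass mk ml = mi * mj / (mk * ml) := by
  rw [rmass, rmass, ← hM]
  have h1 : mi + mj ≠ 0 := by positivity
  field_simp
  try ring

lemma prefactor (mi mj mk ml ni nj nk nl Q kB T : ℝ) (hmi : 0 < mi) (hmj : 0 < mj)
    (hmk : 0 < mk) (hml : 0 < ml) (hM : mi + mj = mk + ml) (hT : 0 < T) (hkB : 0 < kB)
    (hmal' : ni * nj = Real.sqrt (rmass mi mj / rmass mk ml) * (nk * nl) *
      Real.exp (Q / (kB * T))) :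
    (rmass mi mj / rmass mk ml) ^ 2 *
        (nk * (mk / (2 * Real.pi * kB * T)) ^ ((3 : ℝ) / 2)) *
        (nl * (ml / (2 * Real.pi * kB * T)) ^ ((3 : ℝ) / 2)) * Real.exp (Q / (kB * T))
      = (ni * (mi / (2 * Real.pi * kB * T)) ^ ((3 : ℝ) / 2)) *
        (nj * (mj / (2 * Real.pi * kB * T)) ^ ((3 : ℝ) / 2)) := by
  have hD : 0 < 2 * Real.pi * kB * T := by positivity
  have hr := rmass_div mi mj mk ml hmi hmj hmk hml hM
  rw [hr] at hmal' ⊢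
  set D := 2 * Real.pi * kB * T with hDdef
  have hrpos : (0:ℝ) < mi * mj / (mk * ml) := by positivity
  have hCC : (mi / D) ^ ((3 : ℝ) / 2) * (mj / D) ^ ((3 : ℝ) / 2)
      = (mi * mj / (mk * ml)) ^ ((3 : ℝ) / 2) *
        ((mk / D) ^ ((3 : ℝ) / 2) * (ml / D) ^ ((3 : ℝ) / 2)) := by
    rw [← Real.mul_rpow (by positivity) (by positivity),
      ← Real.mul_rpow (by positivity) (by positivity),
      ← Real.mul_rpow (by positivity) (by positivity)]
    congr 1
    field_simp
    try ring
  have hsq : (mi * mj / (mk * ml)) ^ (2:ℕ)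
      = (mi * mj / (mk * ml)) ^ ((1 : ℝ) / 2) * (mi * mj / (mk * ml)) ^ ((3 : ℝ) / 2) := by
    rw [← Real.rpow_natCast (mi * mj / (mk * ml)) 2, ← Real.rpow_add hrpos]
    norm_num
  rw [Real.sqrt_eq_rpow] at hmal'
  linear_combination (nk * nl * (mk / D) ^ ((3:ℝ)/2) * (ml / D) ^ ((3:ℝ)/2) *
      Real.exp (Q / (kB * T))) * hsq
    + (-((mi / D) ^ ((3:ℝ)/2) * (mj / D) ^ ((3:ℝ)/2))) * hmal'
    + (-((mi * mj / (mk * ml)) ^ ((1:ℝ)/2) * nk * nl * Real.exp (Q / (kB * T)))) * hCC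

lemma reK_zero (σ β ζ mi mj mk ml Q ni nj nk nl kB T : ℝ) (hmi : 0 < mi) (hmj : 0 < mj)
    (hmk : 0 < mk) (hml : 0 < ml) (hM : mi + mj = mk + ml) (hT : 0 < T) (hkB : 0 < kB)
    (hζ0 : 0 ≤ ζ) (hζQ : Q ≤ ζ)
    (hmal' : ni * nj = Real.sqrt (rmass mi mj / rmass mk ml) * (nk * nl) *
      Real.exp (Q / (kB * T)))
    (u vi vj ε : E3) (hε : ‖ε‖ = 1) :
    reK σ β (Real.sqrt (2 * ζ / rmass mi mj)) mi mj mk ml Q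
      (Mx ni mi kB T u) (Mx nj mj kB T u) (Mx nk mk kB T u) (Mx nl ml kB T u) vi vj ε = 0 := by
  have hμ : 0 < rmass mi mj := by rw [rmass]; positivity
  rw [reK]
  split
  case isFalse => rfl
  case isTrue h =>
    rcases lt_or_ge (⟪ε, vi - vj⟫ - Real.sqrt (2 * ζ / rmass mi mj)) 0 with hlt | hge
    · rw [heav, if_neg (not_le.mpr hlt)]; ring
    · have hΞ : Real.sqrt (2 * ζ / rmass mi mj) ^ 2 = 2 * ζ / rmass mi mj :=
        Real.sq_sqrt (by positivity)
      have hωnn : 0 ≤ ⟪ε, vi - vj⟫ ^ 2 - 2 * Q / rmass mi mj := by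
        have h1 : Real.sqrt (2 * ζ / rmass mi mj) ≤ ⟪ε, vi - vj⟫ := by linarith
        have h2 : 2 * ζ / rmass mi mj ≤ ⟪ε, vi - vj⟫ ^ 2 := by
          rw [← hΞ]
          exact pow_le_pow_left₀ (Real.sqrt_nonneg _) h1 2
        have h3 : 2 * Q / rmass mi mj ≤ 2 * ζ / rmass mi mj := by
          gcongr
          all_goals linarith
        linarith
      have key : (rmass mi mj / rmass mk ml) ^ 2 *
            Mx nk mk kB T u (vko mi mj mk ml Q vi vj ε) *
            Mx nl ml kB T u (vlo mi mj mk ml Q vi vj ε)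
          = Mx ni mi kB T u vi * Mx nj mj kB T u vj := by
        rw [mul_assoc, mx_mul, mx_mul,
          re_energy mi mj mk ml Q hmi hmj hmk hml hM u vi vj ε hε hωnn]
        have hexp : -(mi * ‖vi - u‖ ^ 2 + mj * ‖vj - u‖ ^ 2 - 2 * Q) / (2 * kB * T)
            = Q / (kB * T) + -(mi * ‖vi - u‖ ^ 2 + mj * ‖vj - u‖ ^ 2) / (2 * kB * T) := by
          field_simp
          ring
        rw [hexp, Real.exp_add]
        have P := prefactor mi mj mk ml ni nj nk nl Q kB T hmi hmj hmk hml hM hT hkB hmal'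
        linear_combination
          Real.exp (-(mi * ‖vi - u‖ ^ 2 + mj * ‖vj - u‖ ^ 2) / (2 * kB * T)) * P
      rw [key]
      ring

lemma rmass_comm (a b : ℝ) : rmass a b = rmass b a := by
  rw [rmass, rmass, mul_comm, add_comm]

/-- Maxwellian distributions satisfying the mass action law are equilibria
of the SRS model: all elastic and reactive collision operators vanish identically. -/
theorem maxwellians_with_mass_action_law_are_equilibria
    (m : Fin 4 → ℝ) (σmat : Fin 4 → Fin 4 → ℝ) (βp ζp : Fin 4 → ℝ) (QR : ℝ)
    (hm : ∀ i, 0 < m i) (hM : m 0 + m 1 = m 2 + m 3)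
    (hσ : ∀ r s, 0 < σmat r s) (hσsym : ∀ r s, σmat r s = σmat s r)
    (hβ : ∀ i, βp i ∈ Set.Ioo (0 : ℝ) 1) (hβ01 : βp 0 = βp 1) (hβ23 : βp 2 = βp 3)
    (hβσ : βp 0 * σmat 0 1 ^ 2 = βp 2 * σmat 2 3 ^ 2)
    (hζ01 : ζp 0 = ζp 1) (hζ0 : max 0 QR ≤ ζp 0) (hζ2 : ζp 2 = ζp 0 - QR) (hζ23 : ζp 2 = ζp 3)
    (n : Fin 4 → ℝ) (hn : ∀ i, 0 ≤ n i)
    (u : E3) (T kB : ℝ) (hT : 0 < T) (hkB : 0 < kB)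
    -- the mass action law
    (hmal : n 0 * n 1 =
      Real.sqrt (rmass (m 0) (m 1) / rmass (m 2) (m 3)) * (n 2 * n 3) *
        Real.exp (QR / (kB * T)))
    (f : Fin 4 → E3 → ℝ)
    (hf : f = fun i v => n i * (m i / (2 * Real.pi * kB * T)) ^ ((3 : ℝ) / 2) *
      Real.exp (-(m i * ‖v - u‖ ^ 2) / (2 * kB * T))) :
    ∀ (i : Fin 4) (v : E3),
      JiE m σmat βp ζp f i v = 0 ∧
      colOp (reKi m (fun i => σmat i (partner i)) βp ζp QR f i) v = 0 := by
  have hfi : ∀ a, f a = Mx (n a) (m a) kB T u := fun a => by rw [hf]; rfl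
  have hQζ0 : QR ≤ ζp 0 := le_trans (le_max_right 0 QR) hζ0
  have h0ζ0 : (0:ℝ) ≤ ζp 0 := le_trans (le_max_left 0 QR) hζ0
  have hmal1 : n 1 * n 0 = Real.sqrt (rmass (m 1) (m 0) / rmass (m 3) (m 2)) * (n 3 * n 2) *
      Real.exp (QR / (kB * T)) := by
    rw [rmass_comm (m 1) (m 0), rmass_comm (m 3) (m 2), mul_comm (n 1) (n 0),
      mul_comm (n 3) (n 2)]
    exact hmal
  have hr01 : 0 < rmass (m 0) (m 1) := by rw [rmass]; have := hm 0; have := hm 1; positivity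
  have hr23 : 0 < rmass (m 2) (m 3) := by rw [rmass]; have := hm 2; have := hm 3; positivity
  have hsne : Real.sqrt (rmass (m 0) (m 1) / rmass (m 2) (m 3)) ≠ 0 :=
    ne_of_gt (Real.sqrt_pos.mpr (by positivity))
  have hmal2 : n 2 * n 3 = Real.sqrt (rmass (m 2) (m 3) / rmass (m 0) (m 1)) * (n 0 * n 1) *
      Real.exp (-QR / (kB * T)) := by
    rw [show rmass (m 2) (m 3) / rmass (m 0) (m 1)
        = (rmass (m 0) (m 1) / rmass (m 2) (m 3))⁻¹ by rw [inv_div],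
      Real.sqrt_inv, hmal, show (-QR / (kB * T)) = -(QR / (kB * T)) by ring, Real.exp_neg]
    field_simp
  have hmal3 : n 3 * n 2 = Real.sqrt (rmass (m 3) (m 2) / rmass (m 1) (m 0)) * (n 1 * n 0) *
      Real.exp (-QR / (kB * T)) := by
    rw [rmass_comm (m 3) (m 2), rmass_comm (m 1) (m 0), mul_comm (n 3) (n 2),
      mul_comm (n 1) (n 0)]
    exact hmal2
  intro i v
  constructor
  · -- elastic
    have hel : ∀ (σv : ℝ) (a b : Fin 4), colOp (elK σv (m a) (m b) (f a) (f b)) v = 0 := by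
      intro σv a b
      rw [hfi a, hfi b]
      exact colOp_zero _ v fun vs ε hε =>
        elK_zero σv (m a) (m b) (n a) (n b) kB T (hm a) (hm b) u v vs ε hε
    have hcorr : colOp (corrK (σmat i (partner i)) (βp i)
        (Real.sqrt (2 * ζp i / rmass (m i) (m (partner i))))
        (m i) (m (partner i)) (f i) (f (partner i))) v = 0 := by
      rw [hfi i, hfi (partner i)]
      exact colOp_zero _ v fun vs ε hε =>
        corrK_zero _ _ _ (m i) (m (partner i)) (n i) (n (partner i)) kB T
          (hm i) (hm (partner i)) u v vs ε hε
    have h2 : (∑ s ∈ Finset.univ.erase i, colOp (elK (σmat i s) (m i) (m s) (f i) (f s)) v)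
        = 0 := Finset.sum_eq_zero fun s _ => hel _ i s
    rw [JiE, hel (σmat i i) i i, h2, hcorr]
    ring
  · -- reactive
    simp only [reKi]
    fin_cases i <;>
      simp only [partner, pk, pl, qsgn, Fin.isValue, Fin.mk_zero, Fin.mk_one,
        show (⟨2, by norm_num⟩ : Fin 4) = 2 from rfl, show (⟨3, by norm_num⟩ : Fin 4) = 3 from rfl,
        Matrix.cons_val_zero, Matrix.cons_val_one, Matrix.head_cons, Matrix.cons_val_two,
        Matrix.tail_cons, Matrix.cons_val_three, Matrix.cons_val_fin_one, one_mul, neg_mul,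
        Matrix.cons_val', Matrix.empty_val']
    · rw [hfi 0, hfi 1, hfi 2, hfi 3]
      exact colOp_zero _ v fun vs ε hε =>
        reK_zero _ _ _ _ _ _ _ QR _ _ _ _ kB T (hm 0) (hm 1) (hm 2) (hm 3) hM hT hkB
          h0ζ0 hQζ0 hmal u v vs ε hε
    · rw [hfi 1, hfi 0, hfi 3, hfi 2, ← hζ01]
      exact colOp_zero _ v fun vs ε hε =>
        reK_zero _ _ _ _ _ _ _ QR _ _ _ _ kB T (hm 1) (hm 0) (hm 3) (hm 2) (by linarith) hT hkB
          h0ζ0 hQζ0 hmal1 u v vs ε hε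
    · rw [hfi 2, hfi 3, hfi 0, hfi 1]
      exact colOp_zero _ v fun vs ε hε =>
        reK_zero _ _ _ _ _ _ _ (-QR) _ _ _ _ kB T (hm 2) (hm 3) (hm 0) (hm 1) (by linarith) hT hkB
          (by rw [hζ2]; linarith) (by rw [hζ2]; linarith) hmal2 u v vs ε hε
    · rw [hfi 3, hfi 2, hfi 1, hfi 0, ← hζ23]
      exact colOp_zero _ v fun vs ε hε =>
        reK_zero _ _ _ _ _ _ _ (-QR) _ _ _ _ kB T (hm 3) (hm 2) (hm 1) (hm 0) (by linarith) hT hkB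
          (by rw [hζ2]; linarith) (by rw [hζ2]; linarith) hmal3 u v vs ε hε
end
end

section
/- Angular integral over the collision hemisphere: for every nonzero w ∈ ℝ³, every Ξ ≥ 0 and every c₀ > 0, ∫_{{ε ∈ 𝕊² : ⟨ε, w⟩ > 0}} Θ(c₀⟨ε, w⟩ − Ξ) ⟨ε, w⟩ dε = π ‖w‖ Θ(‖w‖ − Ξ/c₀) [1 − (Ξ/(c₀‖w‖))²], where the integral is taken with respect to the surface measure of the unit sphere in ℝ³. -/
open MeasureTheory
open scoped RealInnerProductSpace

noncomputable section

/-!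
Put `u = w / ‖w‖` and `α = Ξ / (c₀ ‖w‖)`; the integrand is `‖w‖ ⟨ε, u⟩` on the cap
`α ≤ ⟨ε, u⟩`. Extended to `ℝ³` as `x ↦ ⟨x, u⟩ 𝟙{α ‖x‖ ≤ ⟨x, u⟩}`, it is homogeneous of degree
one, so polar coordinates turn its integral over the sphere into `3 + 1 = 4` times its integral
over the unit ball, that is, over the part of the ball inside the cone of axis `u` and half-angle
`arccos α`. Rotate `u` to the first basis vector and slice perpendicularly to it: the slice at
height `0 < t ≤ 1` is a disc of squared radius `(1 - α²) t² / α²` if `t ≤ α` (cut out by the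
cone) and `1 - t²` otherwise (cut out by the sphere), so the ball integral is
`π ∫₀^α (1 - α²) t³ / α² dt + π ∫_α^1 (t - t³) dt = π (1 - α²) / 4` for `α ≤ 1`, and `0` for
`α > 1`.
-/

open Set Metric Real
open scoped ENNReal

theorem setLIntegral_Ioc_ofReal {f : ℝ → ℝ} {a b : ℝ} (hab : a ≤ b)
    (hf : IntegrableOn f (Ioc a b)) (hf₀ : ∀ t ∈ Ioc a b, 0 ≤ f t) :
    ∫⁻ t in Ioc a b, ENNReal.ofReal (f t) = ENNReal.ofReal (∫ t in a..b, f t) := by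
  rw [intervalIntegral.integral_of_le hab,
    ofReal_integral_eq_lintegral_ofReal hf (ae_restrict_of_forall_mem measurableSet_Ioc hf₀)]

theorem lintegral_volumeIoiPow_pow_mul_indicator_Iic_one (n p : ℕ) :
    ∫⁻ r : Ioi (0 : ℝ), ENNReal.ofReal r.1 ^ p * (Iic 1).indicator 1 r.1
      ∂Measure.volumeIoiPow n = ((n + p + 1 : ℕ) : ℝ≥0∞)⁻¹ := by
  have hmeas : Measurable fun r : ℝ => ENNReal.ofReal r ^ p * (Iic 1).indicator 1 r :=
    by fun_prop (disch := exact measurableSet_Iic)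
  rw [Measure.volumeIoiPow, lintegral_withDensity_eq_lintegral_mul _ (by fun_prop)
      (g := fun r : Ioi (0 : ℝ) => ENNReal.ofReal r.1 ^ p * (Iic 1).indicator 1 r.1)
      (hmeas.comp measurable_subtype_coe)]
  refine (lintegral_subtype_comap measurableSet_Ioi (fun r => ENNReal.ofReal (r ^ n) *
      (ENNReal.ofReal r ^ p * (Iic 1).indicator 1 r))).trans ?_
  rw [← Ioc_union_Ioi_eq_Ioi zero_le_one, lintegral_union measurableSet_Ioi Ioc_disjoint_Ioi_same,
    setLIntegral_congr_fun measurableSet_Ioc (g := fun r => ENNReal.ofReal (r ^ (n + p))),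
    setLIntegral_congr_fun measurableSet_Ioi (g := fun _ => 0), lintegral_zero, add_zero,
    setLIntegral_Ioc_ofReal zero_le_one (continuous_pow _).integrableOn_Ioc
      (fun r hr => by have := hr.1; positivity), integral_pow]
  · rw [one_pow, zero_pow (Nat.succ_ne_zero _), sub_zero, one_div,
      ENNReal.ofReal_inv_of_pos (by positivity)]
    norm_cast
  · intro r hr
    simp [hr.out]
  · intro r hr
    simp [indicator_of_mem (mem_Iic.2 hr.2), ← ENNReal.ofReal_pow hr.1.le,
      ← ENNReal.ofReal_mul (pow_nonneg hr.1.le n), pow_add]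

section Polar

variable {E : Type*} [NormedAddCommGroup E] [NormedSpace ℝ E] [FiniteDimensional ℝ E]
  [MeasurableSpace E] [BorelSpace E] [Nontrivial E] (μ : Measure E) [μ.IsAddHaarMeasure]

theorem lintegral_eq_lintegral_toSphere_prod {F : E → ℝ≥0∞} (hF : Measurable F) :
    ∫⁻ x, F x ∂μ = ∫⁻ p : sphere (0 : E) 1 × Ioi (0 : ℝ), F (p.2.1 • p.1.1)
      ∂(μ.toSphere.prod (Measure.volumeIoiPow (Module.finrank ℝ E - 1))) := by
  conv_lhs => rw [← restrict_compl_singleton (μ := μ) 0,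
    ← lintegral_subtype_comap (measurableSet_singleton _).compl]
  rw [← μ.measurePreserving_homeomorphUnitSphereProd.lintegral_comp (by fun_prop)]
  congr with x
  simp [smul_inv_smul₀ (norm_ne_zero_iff.2 x.2)]

theorem lintegral_toSphere_eq_mul_setLIntegral_closedBall {p : ℕ} {G : E → ℝ≥0∞}
    (hG : Measurable G) (hhom : ∀ r : ℝ, 0 < r → ∀ x, G (r • x) = ENNReal.ofReal r ^ p * G x) :
    ∫⁻ ε, G ε ∂μ.toSphere = (Module.finrank ℝ E + p) * ∫⁻ x in closedBall (0 : E) 1, G x ∂μ := by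
  have hsplit : ∀ q : sphere (0 : E) 1 × Ioi (0 : ℝ),
      (closedBall (0 : E) 1).indicator G (q.2.1 • q.1.1) =
        G q.1 * (ENNReal.ofReal q.2.1 ^ p * (Iic 1).indicator 1 q.2.1) := by
    rintro ⟨ε, r, hr : 0 < r⟩
    by_cases hr1 : r ≤ 1
    · simp [indicator, norm_smul, abs_of_pos hr, hr1, hhom r hr, mul_comm]
    · simp [indicator, norm_smul, abs_of_pos hr, hr1]
  have hdim : Module.finrank ℝ E - 1 + p + 1 = Module.finrank ℝ E + p := by
    have := Module.finrank_pos (R := ℝ) (M := E)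
    omega
  rw [← lintegral_indicator measurableSet_closedBall,
    lintegral_eq_lintegral_toSphere_prod μ (hG.indicator measurableSet_closedBall),
    lintegral_congr hsplit, lintegral_prod_mul (f := fun ε : sphere (0 : E) 1 => G ε)
      (g := fun r : Ioi (0 : ℝ) => ENNReal.ofReal r.1 ^ p * (Iic 1).indicator 1 r.1)
      (by fun_prop) (by fun_prop (disch := exact measurableSet_Iic)),
    lintegral_volumeIoiPow_pow_mul_indicator_Iic_one, hdim, mul_left_comm, Nat.cast_add,
    ENNReal.mul_inv_cancel (by simp [Module.finrank_pos.ne']) (by simp), mul_one]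

end Polar

theorem exists_linearIsometryEquiv_apply_eq {F : Type*} [NormedAddCommGroup F]
    [InnerProductSpace ℝ F] {v w : F} (h : ‖v‖ = ‖w‖) : ∃ T : F ≃ₗᵢ[ℝ] F, T v = w :=
  ⟨_, Submodule.reflection_sub h⟩

namespace EuclideanSpace

theorem lintegral_eq_lintegral_cons {n : ℕ} {F : EuclideanSpace ℝ (Fin (n + 1)) → ℝ≥0∞}
    (hF : Measurable F) :
    ∫⁻ x, F x = ∫⁻ t : ℝ, ∫⁻ z : EuclideanSpace ℝ (Fin n), F (WithLp.toLp 2 (Fin.cons t z)) := by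
  have hsplit :=
    (measurePreserving_piFinSuccAbove (fun _ : Fin (n + 1) => (volume : Measure ℝ)) 0).symm
  rw [← volume_pi, ← volume_pi] at hsplit
  rw [← (PiLp.volume_preserving_toLp (Fin (n + 1))).lintegral_comp hF,
    ← hsplit.lintegral_comp (by fun_prop), lintegral_prod _ (by fun_prop)]
  congr with t
  rw [← (PiLp.volume_preserving_ofLp (Fin n)).lintegral_comp (by fun_prop)]
  simp only [MeasurableEquiv.piFinSuccAbove_symm_apply, Fin.insertNthEquiv_zero]
  rfl

theorem norm_toLp_cons_sq {n : ℕ} (t : ℝ) (z : EuclideanSpace ℝ (Fin n)) :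
    ‖(WithLp.toLp 2 (Fin.cons t z : Fin (n + 1) → ℝ) : EuclideanSpace ℝ (Fin (n + 1)))‖ ^ 2 =
      t ^ 2 + ‖z‖ ^ 2 := by
  simp [EuclideanSpace.norm_sq_eq, Fin.sum_univ_succ]

theorem volume_setOf_norm_sq_le_fin_two (s : ℝ) :
    volume {z : EuclideanSpace ℝ (Fin 2) | ‖z‖ ^ 2 ≤ s} = ENNReal.ofReal (π * s) := by
  rcases lt_or_ge s 0 with hs | hs
  · rw [ENNReal.ofReal_of_nonpos (mul_nonpos_of_nonneg_of_nonpos pi_pos.le hs.le),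
      measure_eq_zero_iff_ae_notMem]
    exact ae_of_all _ fun z hz => (hs.trans_le (by positivity)).not_ge hz
  · have hball : {z : EuclideanSpace ℝ (Fin 2) | ‖z‖ ^ 2 ≤ s} = closedBall 0 √s := by
      ext z
      simp [Real.le_sqrt (norm_nonneg z) hs]
    rw [hball, EuclideanSpace.volume_closedBall_fin_two, ← ENNReal.ofReal_pow (sqrt_nonneg s),
      sq_sqrt hs, ← ENNReal.ofReal_mul hs, mul_comm]

end EuclideanSpace

theorem volume_slice_closedBall_inter_cone {α t : ℝ} (hα : 0 ≤ α) (ht : 0 < t) :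
    volume {z : EuclideanSpace ℝ (Fin 2) |
      (WithLp.toLp 2 (Fin.cons t z : Fin 3 → ℝ) : E3) ∈ closedBall 0 1 ∩ {x | α * ‖x‖ ≤ x 0}} =
      ENNReal.ofReal (π * if t ≤ α then (1 - α ^ 2) / α ^ 2 * t ^ 2 else 1 - t ^ 2) := by
  rw [← EuclideanSpace.volume_setOf_norm_sq_le_fin_two]
  congr 1
  ext z
  have hx := EuclideanSpace.norm_toLp_cons_sq t z
  have hx₀ := norm_nonneg (WithLp.toLp 2 (Fin.cons t z : Fin 3 → ℝ) : E3)
  simp only [mem_ofPred_eq, mem_inter_iff, mem_closedBall_zero_iff]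
  change _ ∧ _ ≤ t ↔ _
  generalize ‖(WithLp.toLp 2 (Fin.cons t z : Fin 3 → ℝ) : E3)‖ = r at hx hx₀ ⊢
  rw [← sq_le_one_iff₀ hx₀, ← pow_le_pow_iff_left₀ (by positivity) ht.le two_ne_zero, mul_pow, hx]
  split_ifs with htα
  · have hα₀ : 0 < α := ht.trans_le htα
    rw [div_mul_eq_mul_div, le_div_iff₀ (by positivity)]
    constructor
    · rintro ⟨-, h⟩
      nlinarith
    · intro h
      refine ⟨?_, by nlinarith⟩
      by_contra! hc
      nlinarith [mul_le_mul htα htα ht.le hα, mul_pos (pow_pos hα₀ 2) (sub_pos.2 hc)]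
  · constructor
    · rintro ⟨h, -⟩
      linarith
    · intro h
      exact ⟨by linarith, by nlinarith⟩

theorem setLIntegral_closedBall_inter_cone_coord {α : ℝ} (hα : 0 ≤ α) :
    ∫⁻ x in closedBall (0 : E3) 1 ∩ {x | α * ‖x‖ ≤ x 0}, ENNReal.ofReal (x 0) =
      ENNReal.ofReal (π / 4 * (1 - α ^ 2)) := by
  set C := closedBall (0 : E3) 1 ∩ {x | α * ‖x‖ ≤ x 0}
  have hC : MeasurableSet C :=
    measurableSet_closedBall.inter (measurableSet_le (by fun_prop) (by fun_prop))
  rcases lt_or_ge 1 α with hα1 | hα1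
  · rw [setLIntegral_congr_fun hC (g := fun _ => 0), lintegral_zero,
      ENNReal.ofReal_of_nonpos (mul_nonpos_of_nonneg_of_nonpos (by positivity) (by nlinarith))]
    rintro x ⟨-, hx : α * ‖x‖ ≤ x 0⟩
    have := (le_abs_self _).trans (PiLp.norm_apply_le x 0)
    rw [ENNReal.ofReal_eq_zero]
    by_contra! h
    nlinarith [mul_pos (sub_pos.2 hα1) (h.trans_le this)]
  have hslice : ∀ t : ℝ, ∫⁻ z : EuclideanSpace ℝ (Fin 2),
      C.indicator (fun x => ENNReal.ofReal (x 0)) (WithLp.toLp 2 (Fin.cons t z)) =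
      (Ioc 0 α).indicator (fun t => ENNReal.ofReal (π * (1 - α ^ 2) / α ^ 2 * t ^ 3)) t +
        (Ioc α 1).indicator (fun t => ENNReal.ofReal (π * (t - t ^ 3))) t := by
    intro t
    rcases le_or_gt t 0 with ht | ht
    · have hz : ∀ z : EuclideanSpace ℝ (Fin 2),
          C.indicator (fun x => ENNReal.ofReal (x 0)) (WithLp.toLp 2 (Fin.cons t z)) = 0 :=
        fun z => indicator_apply_eq_zero.2 fun _ => ENNReal.ofReal_of_nonpos ht
      simp [hz, indicator_of_notMem (fun h : t ∈ Ioc 0 α => ht.not_gt h.1),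
        indicator_of_notMem (fun h : t ∈ Ioc α 1 => (ht.trans hα).not_gt h.1)]
    have hz : ∀ z : EuclideanSpace ℝ (Fin 2),
        C.indicator (fun x => ENNReal.ofReal (x 0)) (WithLp.toLp 2 (Fin.cons t z)) =
        indicator {z : EuclideanSpace ℝ (Fin 2) |
          (WithLp.toLp 2 (Fin.cons t z : Fin 3 → ℝ) : E3) ∈ C} (fun _ => ENNReal.ofReal t) z :=
      fun z => rfl
    have hmeas : MeasurableSet {z : EuclideanSpace ℝ (Fin 2) |
        (WithLp.toLp 2 (Fin.cons t z : Fin 3 → ℝ) : E3) ∈ C} := hC.preimage (by fun_prop)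
    rw [lintegral_congr hz, lintegral_indicator_const hmeas,
      volume_slice_closedBall_inter_cone hα ht, ← ENNReal.ofReal_mul ht.le]
    split_ifs with htα
    · rw [indicator_of_mem (show t ∈ Ioc 0 α from ⟨ht, htα⟩),
        indicator_of_notMem (fun h => h.1.not_ge htα), add_zero]
      ring_nf
    rw [indicator_of_notMem (fun h => htα h.2), zero_add]
    rcases le_or_gt t 1 with ht1 | ht1
    · rw [indicator_of_mem (show t ∈ Ioc α 1 from ⟨not_le.1 htα, ht1⟩)]
      ring_nf
    · rw [indicator_of_notMem (fun h => ht1.not_ge h.2), ENNReal.ofReal_of_nonpos]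
      nlinarith [mul_pos (mul_pos ht pi_pos) (sub_pos.2 ht1)]
  have hf₁ : ∀ t ∈ Icc 0 α, 0 ≤ π * (1 - α ^ 2) / α ^ 2 * t ^ 3 := fun t ht => by
    have : 0 ≤ 1 - α ^ 2 := by nlinarith
    have := ht.1
    positivity
  have hf₂ : ∀ t ∈ Icc α 1, 0 ≤ π * (t - t ^ 3) := fun t ht => by
    have h₀ : 0 ≤ t := hα.trans ht.1
    have : 0 ≤ t - t ^ 3 := by
      nlinarith [mul_nonneg (mul_nonneg h₀ (sub_nonneg.2 ht.2)) (by linarith : (0 : ℝ) ≤ 1 + t)]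
    positivity
  rw [← lintegral_indicator hC,
    EuclideanSpace.lintegral_eq_lintegral_cons (by fun_prop (disch := exact hC)),
    lintegral_congr hslice, lintegral_add_left (by fun_prop (disch := exact measurableSet_Ioc)),
    lintegral_indicator measurableSet_Ioc, lintegral_indicator measurableSet_Ioc,
    setLIntegral_Ioc_ofReal hα (Continuous.integrableOn_Ioc (by fun_prop))
      (fun t ht => hf₁ t (Ioc_subset_Icc_self ht)),
    setLIntegral_Ioc_ofReal hα1 (Continuous.integrableOn_Ioc (by fun_prop))
      (fun t ht => hf₂ t (Ioc_subset_Icc_self ht)),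
    ← ENNReal.ofReal_add (intervalIntegral.integral_nonneg hα hf₁)
      (intervalIntegral.integral_nonneg hα1 hf₂)]
  congr 1
  simp only [intervalIntegral.integral_const_mul, intervalIntegral.integral_sub
    intervalIntegral.intervalIntegrable_id (intervalIntegral.intervalIntegrable_pow 3), integral_id,
    integral_pow]
  -- at `α = 0` the first piece lives on the empty interval `Ioc 0 0` and its junk coefficient
  -- `(1 - 0) / 0 = 0` is harmless
  rcases eq_or_ne α 0 with rfl | hα₀
  · ring
  · field_simp
    ring

theorem setLIntegral_closedBall_inter_cone {u : E3} (hu : ‖u‖ = 1) {α : ℝ} (hα : 0 ≤ α) :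
    ∫⁻ x in closedBall (0 : E3) 1 ∩ {x | α * ‖x‖ ≤ ⟪x, u⟫}, ENNReal.ofReal ⟪x, u⟫ =
      ENNReal.ofReal (π / 4 * (1 - α ^ 2)) := by
  obtain ⟨T, hT⟩ := exists_linearIsometryEquiv_apply_eq
    (v := EuclideanSpace.single (0 : Fin 3) (1 : ℝ)) (w := u) (by simp [hu])
  have hTu : ∀ x, ⟪T x, u⟫ = x 0 := fun x => by
    rw [← hT, LinearIsometryEquiv.inner_map_map, EuclideanSpace.inner_single_right]
    simp
  have hC : ∀ f : E3 → ℝ, Continuous f →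
      MeasurableSet (closedBall (0 : E3) 1 ∩ {x | α * ‖x‖ ≤ f x}) :=
    fun f hf => measurableSet_closedBall.inter (measurableSet_le (by fun_prop) hf.measurable)
  rw [← setLIntegral_closedBall_inter_cone_coord hα, ← lintegral_indicator (hC _ (by fun_prop)),
    ← lintegral_indicator (hC _ (by fun_prop)),
    ← T.measurePreserving.lintegral_comp ((by fun_prop : Measurable fun x : E3 =>
      ENNReal.ofReal ⟪x, u⟫).indicator (hC _ (by fun_prop)))]
  congr with x
  simp [indicator, hTu]

theorem lintegral_toSphere_inner_cap {u : E3} (hu : ‖u‖ = 1) {α : ℝ} (hα : 0 ≤ α) :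
    ∫⁻ ε : sphere (0 : E3) 1, {x : E3 | α ≤ ⟪x, u⟫}.indicator (fun x => ENNReal.ofReal ⟪x, u⟫) ε
      ∂volume.toSphere = ENNReal.ofReal (π * (1 - α ^ 2)) := by
  set K := {x : E3 | α * ‖x‖ ≤ ⟪x, u⟫}
  have hK : MeasurableSet K := measurableSet_le (by fun_prop) (by fun_prop)
  have hsphere : ∀ ε : sphere (0 : E3) 1,
      {x : E3 | α ≤ ⟪x, u⟫}.indicator (fun x => ENNReal.ofReal ⟪x, u⟫) ε =
        K.indicator (fun x => ENNReal.ofReal ⟪x, u⟫) ε := fun ε => by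
    simp [K, indicator, norm_eq_of_mem_sphere ε]
  have hhom : ∀ r : ℝ, 0 < r → ∀ x : E3, K.indicator (fun x => ENNReal.ofReal ⟪x, u⟫) (r • x) =
      ENNReal.ofReal r ^ 1 * K.indicator (fun x => ENNReal.ofReal ⟪x, u⟫) x := fun r hr x => by
    simp [K, indicator, norm_smul, abs_of_pos hr, real_inner_smul_left, mul_left_comm α r,
      mul_le_mul_iff_right₀ hr, ENNReal.ofReal_mul hr.le]
  rw [lintegral_congr hsphere,
    lintegral_toSphere_eq_mul_setLIntegral_closedBall _
      ((by fun_prop : Measurable fun x : E3 => ENNReal.ofReal ⟪x, u⟫).indicator hK) hhom,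
    setLIntegral_indicator hK, inter_comm, setLIntegral_closedBall_inter_cone hu hα,
    finrank_euclideanSpace_fin, show ((3 : ℕ) : ℝ≥0∞) + (1 : ℕ) = ENNReal.ofReal 4 by norm_num,
    ← ENNReal.ofReal_mul zero_le_four]
  ring_nf

theorem heav_of_nonneg {x : ℝ} (hx : 0 ≤ x) : heav x = 1 := if_pos hx

theorem heav_of_neg {x : ℝ} (hx : x < 0) : heav x = 0 := if_neg hx.not_ge

theorem heav_mul_of_pos {r : ℝ} (hr : 0 < r) (x : ℝ) : heav (r * x) = heav x := by
  simp only [heav, mul_nonneg_iff_of_pos_left hr]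

theorem setIntegral_sphMeasure_inner_cap {u : E3} (hu : ‖u‖ = 1) {α : ℝ} (hα : 0 ≤ α) :
    ∫ ε in {ε : E3 | α ≤ ⟪ε, u⟫}, ⟪ε, u⟫ ∂sphMeasure = π * heav (1 - α) * (1 - α ^ 2) := by
  have hS : MeasurableSet {ε : E3 | α ≤ ⟪ε, u⟫} := measurableSet_le (by fun_prop) (by fun_prop)
  have hofReal : ∀ ε : sphere (0 : E3) 1,
      ENNReal.ofReal ({x : E3 | α ≤ ⟪x, u⟫}.indicator (fun x => ⟪x, u⟫) ε) =
        {x : E3 | α ≤ ⟪x, u⟫}.indicator (fun x => ENNReal.ofReal ⟪x, u⟫) ε := fun ε => by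
    by_cases h : (ε : E3) ∈ {x : E3 | α ≤ ⟪x, u⟫} <;> simp [h]
  have hmeas : Measurable ({x : E3 | α ≤ ⟪x, u⟫}.indicator fun x => ⟪x, u⟫) :=
    (by fun_prop : Measurable fun x : E3 => ⟪x, u⟫).indicator hS
  rw [← integral_indicator hS, sphMeasure,
    (MeasurableEmbedding.subtype_coe isClosed_sphere.measurableSet).integral_map,
    integral_eq_lintegral_of_nonneg_ae
      (f := fun ε : sphere (0 : E3) 1 => {x : E3 | α ≤ ⟪x, u⟫}.indicator (fun x => ⟪x, u⟫) ε)
      (ae_of_all _ fun ε => indicator_nonneg (fun x hx => hα.trans hx) _)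
      (hmeas.comp measurable_subtype_coe).aestronglyMeasurable,
    lintegral_congr hofReal, lintegral_toSphere_inner_cap hu hα]
  rcases le_or_gt α 1 with hα1 | hα1
  · rw [heav_of_nonneg (sub_nonneg.2 hα1),
      ENNReal.toReal_ofReal (mul_nonneg pi_pos.le (by nlinarith))]
    ring
  · rw [heav_of_neg (sub_neg.2 hα1),
      ENNReal.ofReal_of_nonpos (mul_nonpos_of_nonneg_of_nonpos pi_pos.le (by nlinarith))]
    simp

theorem ite_pos_heav_mul_eq_mul_ite {b c Ξ : ℝ} (hb : 0 < b) (hc : 0 < c) (hΞ : 0 ≤ Ξ) (s : ℝ) :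
    (if 0 < b * s then heav (c * (b * s) - Ξ) * (b * s) else 0) =
      b * if Ξ / (c * b) ≤ s then s else 0 := by
  have hcap : Ξ / (c * b) ≤ s ↔ 0 ≤ c * (b * s) - Ξ := by
    rw [div_le_iff₀ (by positivity), sub_nonneg, mul_comm s, mul_assoc]
  by_cases hs : Ξ / (c * b) ≤ s
  · rcases ((by positivity : 0 ≤ Ξ / (c * b)).trans hs).eq_or_lt with rfl | hs₀
    · simp
    · simp [hs, mul_pos hb hs₀, heav_of_nonneg (hcap.1 hs)]
  · simp [hs, heav_of_neg (not_le.1 (mt hcap.2 hs))]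

/-- Angular integral over the collision hemisphere:
`∫_{⟨ε,w⟩>0} Θ(c₀⟨ε,w⟩ − Ξ)⟨ε,w⟩ dε = π‖w‖ Θ(‖w‖ − Ξ/c₀)(1 − (Ξ/(c₀‖w‖))²)`. -/
theorem angular_integral_over_hemisphere
    (w : E3) (hw : w ≠ 0) (Ξ : ℝ) (hΞ : 0 ≤ Ξ) (c0 : ℝ) (hc0 : 0 < c0) :
    (∫ ε in {ε : E3 | 0 < ⟪ε, w⟫}, heav (c0 * ⟪ε, w⟫ - Ξ) * ⟪ε, w⟫ ∂sphMeasure)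
    = Real.pi * ‖w‖ * heav (‖w‖ - Ξ / c0) * (1 - (Ξ / (c0 * ‖w‖)) ^ 2) := by
  have hb : 0 < ‖w‖ := norm_pos_iff.2 hw
  set u : E3 := ‖w‖⁻¹ • w
  have hu : ‖u‖ = 1 := by simp [u, norm_smul, hb.ne']
  have hwu : ∀ ε : E3, ⟪ε, w⟫ = ‖w‖ * ⟪ε, u⟫ := fun ε => by
    simp [u, real_inner_smul_right, hb.ne']
  have hind : {ε : E3 | 0 < ⟪ε, w⟫}.indicator (fun ε => heav (c0 * ⟪ε, w⟫ - Ξ) * ⟪ε, w⟫) =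
      fun ε => ‖w‖ * {ε : E3 | Ξ / (c0 * ‖w‖) ≤ ⟪ε, u⟫}.indicator (fun ε => ⟪ε, u⟫) ε := by
    ext ε
    simp only [indicator, mem_ofPred_eq, hwu]
    exact ite_pos_heav_mul_eq_mul_ite hb hc0 hΞ _
  rw [← integral_indicator (measurableSet_lt measurable_const (by fun_prop)), hind,
    integral_const_mul, integral_indicator (measurableSet_le measurable_const (by fun_prop)),
    setIntegral_sphMeasure_inner_cap hu (by positivity),
    show ‖w‖ - Ξ / c0 = ‖w‖ * (1 - Ξ / (c0 * ‖w‖)) by field_simp, heav_mul_of_pos hb]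
  ring
end
end

section
/- Mass action law form of the reaction rate: the quantity 𝒥₁ defined below equals k_b c₃ c₄ − k_f c₁ c₂, where the forward and backward rate constants are k_f = σ² √(8π k_B T/μ₁₂) exp(−ζ₁/(k_B T)) and k_b = σ² √(8π k_B T/μ₃₄) exp(−ζ₃/(k_B T)). In particular, (2k_B T/μ₁₂) Γ(2, ζ₁/(k_B T)) − (2ζ₁/μ₁₂) Γ(1, ζ₁/(k_B T)) = (2k_B T/μ₁₂) exp(−ζ₁/(k_B T)). -/
noncomputable section

/-- The upper incomplete gamma function `Γ(η, x) = ∫_x^∞ t^{η−1} e^{−t} dt`. -/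
def iGamma (η x : ℝ) : ℝ := ∫ t in Set.Ioi x, t ^ (η - 1) * Real.exp (-t)

/-!
Since `Γ(1, x) = e^{-x}` and, `-(t + 1) e^{-t}` being an antiderivative of `t e^{-t}`
that vanishes at infinity, `Γ(2, x) = (x + 1) e^{-x}`, the bracket
`θ Γ(2, ζ/θ) - ζ Γ(1, ζ/θ)` collapses to `θ e^{-ζ/θ}`. The rate then factors into the
mass action form once the square-root prefactors and the Boltzmann factors
`e^{Q_R/(k_B T)} e^{-ζ₁/(k_B T)} = e^{-ζ₃/(k_B T)}` are merged.
-/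

open Real Set Filter Topology MeasureTheory

lemma iGamma_one (x : ℝ) : iGamma 1 x = exp (-x) := by
  simpa [iGamma] using integral_exp_neg_Ioi x

lemma integrableOn_mul_exp_neg_Ioi (a : ℝ) : IntegrableOn (fun t => t * exp (-t)) (Ioi a) := by
  have hdecay : (fun t : ℝ => t * exp (-t)) =O[atTop] fun t => exp (-(1 / 2) * t) := by
    simpa [mul_comm] using (Real.Gamma_integrand_isLittleO 1).isBigO
  exact integrable_of_isBigO_exp_neg one_half_pos (by fun_prop) hdecay

lemma iGamma_two (x : ℝ) : iGamma 2 x = (x + 1) * exp (-x) := by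
  have hderiv : ∀ t ∈ Ici x,
      HasDerivAt (fun t => -((t + 1) * exp (-t))) (t * exp (-t)) t := by
    intro t _
    have h : HasDerivAt (fun t => -((t + 1) * exp (-t)))
        (-(1 * exp (-t) + (t + 1) * (exp (-t) * -1))) t :=
      (((hasDerivAt_id' t).add_const 1).mul (hasDerivAt_neg' t).exp).neg
    convert h using 1
    ring
  have hlimit : Tendsto (fun t => -((t + 1) * exp (-t))) atTop (𝓝 0) := by
    have := ((tendsto_pow_mul_exp_neg_atTop_nhds_zero 1).add
      (tendsto_pow_mul_exp_neg_atTop_nhds_zero 0)).neg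
    simpa [add_mul] using this
  have hintegrand : (fun t : ℝ => t ^ ((2 : ℝ) - 1) * exp (-t)) = fun t => t * exp (-t) := by
    norm_num
  rw [iGamma, hintegrand,
    integral_Ioi_of_hasDerivAt_of_tendsto' hderiv (integrableOn_mul_exp_neg_Ioi x) hlimit]
  ring

lemma mul_iGamma_two_sub_mul_iGamma_one {θ : ℝ} (hθ : θ ≠ 0) (ζ : ℝ) :
    θ * iGamma 2 (ζ / θ) - ζ * iGamma 1 (ζ / θ) = θ * exp (-ζ / θ) := by
  rw [iGamma_two, iGamma_one, neg_div]
  field_simp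
  ring

lemma rmass_pos {a b : ℝ} (ha : 0 < a) (hb : 0 < b) : 0 < rmass a b := by
  unfold rmass
  positivity

lemma sqrt_div_mul_div {μ θ : ℝ} (hμ : 0 < μ) (hθ : 0 < θ) (c : ℝ) :
    √(c * μ / θ) * (2 * θ / μ) = √(4 * c * θ / μ) := by
  rw [show 4 * c * θ / μ = c * μ / θ * (2 * θ / μ) ^ 2 by field_simp; ring,
    Real.sqrt_mul' _ (by positivity), Real.sqrt_sq (by positivity)]

lemma sqrt_div_mul_sqrt_div {μ ν : ℝ} (hμ : 0 < μ) (hν : 0 ≤ ν) (c : ℝ) :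
    √(μ / ν) * √(c / μ) = √(c / ν) := by
  rw [← Real.sqrt_mul (by positivity)]
  congr 1
  field_simp

theorem reaction_rate_mass_action_form_general
    (m1 m2 m3 m4 : ℝ) (hm1 : 0 < m1) (hm2 : 0 < m2) (hm3 : 0 < m3) (hm4 : 0 < m4)
    (QR σ T kB : ℝ) (hT : 0 < T) (hkB : 0 < kB)
    (ζ1 ζ3 : ℝ) (hζ3 : ζ3 = ζ1 - QR)
    (c1 c2 c3 c4 : ℝ)
    (J1 kf kb : ℝ)
    (hJ1 : J1 = σ ^ 2 * Real.sqrt (2 * Real.pi * rmass m1 m2 / (kB * T)) *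
      (Real.sqrt (rmass m1 m2 / rmass m3 m4) * (c3 * c4) * Real.exp (QR / (kB * T))
        - c1 * c2) *
      ((2 * kB * T / rmass m1 m2) * iGamma 2 (ζ1 / (kB * T))
        - (2 * ζ1 / rmass m1 m2) * iGamma 1 (ζ1 / (kB * T))))
    (hkf : kf = σ ^ 2 * Real.sqrt (8 * Real.pi * kB * T / rmass m1 m2) *
      Real.exp (-ζ1 / (kB * T)))
    (hkb : kb = σ ^ 2 * Real.sqrt (8 * Real.pi * kB * T / rmass m3 m4) *
      Real.exp (-ζ3 / (kB * T))) :
    J1 = kb * (c3 * c4) - kf * (c1 * c2) ∧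
    (2 * kB * T / rmass m1 m2) * iGamma 2 (ζ1 / (kB * T))
        - (2 * ζ1 / rmass m1 m2) * iGamma 1 (ζ1 / (kB * T))
      = (2 * kB * T / rmass m1 m2) * Real.exp (-ζ1 / (kB * T)) := by
  have hθ : 0 < kB * T := mul_pos hkB hT
  have hμ12 := rmass_pos hm1 hm2
  have hbracket : (2 * kB * T / rmass m1 m2) * iGamma 2 (ζ1 / (kB * T))
        - (2 * ζ1 / rmass m1 m2) * iGamma 1 (ζ1 / (kB * T))
      = (2 * kB * T / rmass m1 m2) * exp (-ζ1 / (kB * T)) := by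
    linear_combination (2 / rmass m1 m2) * mul_iGamma_two_sub_mul_iGamma_one hθ.ne' ζ1
  refine ⟨?_, hbracket⟩
  have hprefactor : √(2 * π * rmass m1 m2 / (kB * T)) * (2 * kB * T / rmass m1 m2)
      = √(8 * π * kB * T / rmass m1 m2) := by
    convert sqrt_div_mul_div hμ12 hθ (2 * π) using 2 <;> ring
  have hmass_ratio : √(rmass m1 m2 / rmass m3 m4) * √(8 * π * kB * T / rmass m1 m2)
      = √(8 * π * kB * T / rmass m3 m4) :=
    sqrt_div_mul_sqrt_div hμ12 (rmass_pos hm3 hm4).le _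
  have hboltzmann : exp (QR / (kB * T)) * exp (-ζ1 / (kB * T)) = exp (-ζ3 / (kB * T)) := by
    rw [← exp_add, hζ3]
    ring_nf
  rw [hJ1, hbracket, hkf, hkb, ← hmass_ratio, ← hprefactor, ← hboltzmann]
  ring

/-- Mass action law form of the reaction rate:
`𝒥₁ = k_b c₃c₄ − k_f c₁c₂` with the forward and backward rate constants
`k_f = σ²√(8πk_BT/μ₁₂)e^{−ζ₁/(k_BT)}` and `k_b = σ²√(8πk_BT/μ₃₄)e^{−ζ₃/(k_BT)}`;
in particular the incomplete-gamma bracket collapses to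
`(2k_BT/μ₁₂)e^{−ζ₁/(k_BT)}`. -/
theorem reaction_rate_mass_action_form
    (m1 m2 m3 m4 : ℝ) (hm1 : 0 < m1) (hm2 : 0 < m2) (hm3 : 0 < m3) (hm4 : 0 < m4)
    (hM : m1 + m2 = m3 + m4)
    (QR σ T kB : ℝ) (hσ : 0 < σ) (hT : 0 < T) (hkB : 0 < kB)
    (ζ1 ζ3 : ℝ) (hζ1 : max 0 QR ≤ ζ1) (hζ3 : ζ3 = ζ1 - QR)
    (c1 c2 c3 c4 : ℝ) (hc1 : 0 ≤ c1) (hc2 : 0 ≤ c2) (hc3 : 0 ≤ c3) (hc4 : 0 ≤ c4)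
    (J1 kf kb : ℝ)
    (hJ1 : J1 = σ ^ 2 * Real.sqrt (2 * Real.pi * rmass m1 m2 / (kB * T)) *
      (Real.sqrt (rmass m1 m2 / rmass m3 m4) * (c3 * c4) * Real.exp (QR / (kB * T))
        - c1 * c2) *
      ((2 * kB * T / rmass m1 m2) * iGamma 2 (ζ1 / (kB * T))
        - (2 * ζ1 / rmass m1 m2) * iGamma 1 (ζ1 / (kB * T))))
    (hkf : kf = σ ^ 2 * Real.sqrt (8 * Real.pi * kB * T / rmass m1 m2) *
      Real.exp (-ζ1 / (kB * T)))
    (hkb : kb = σ ^ 2 * Real.sqrt (8 * Real.pi * kB * T / rmass m3 m4) *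
      Real.exp (-ζ3 / (kB * T))) :
    J1 = kb * (c3 * c4) - kf * (c1 * c2) ∧
    (2 * kB * T / rmass m1 m2) * iGamma 2 (ζ1 / (kB * T))
        - (2 * ζ1 / rmass m1 m2) * iGamma 1 (ζ1 / (kB * T))
      = (2 * kB * T / rmass m1 m2) * Real.exp (-ζ1 / (kB * T)) :=
  reaction_rate_mass_action_form_general m1 m2 m3 m4 hm1 hm2 hm3 hm4 QR σ T kB hT hkB ζ1 ζ3 hζ3 c1
    c2 c3 c4 J1 kf kb hJ1 hkf hkb
end
end
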